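/- There exists a constant C > 0 such that for every natural number k ≥ 2 and every real M ≥ 1, there exists a finite set S of vectors in ℝ^k with ‖v‖ = 1 for every v ∈ S, with cardinality (|S| : ℝ) ≥ k^M, such that for all distinct u, v ∈ S, √2 − C·√(M·log k / k) ≤ ‖u − v‖ ≤ √2 + C·√(M·log k / k). -/

import Mathlib

/-!
Scale the vertices of the cube `{-1, 1}^k` by `1/√k`: they become unit vectors whose pairwise
inner products are `1/k` times a sum of `k` independent signs. The exponential moment of such a
sum is `(2 cosh s)^k ≤ 2^k e^{k s²/2}`, so a Chernoff bound shows that a vertex has inner product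
at least `δ` in absolute value with at most `2 · 2^k e^{-k δ²/2}` other vertices. In the graph of
these bad pairs, a maximum independent set dominates, hence has at least `2^k / (Δ + 1)` elements,
which is `≥ e^{k δ²/2} / 3`. For `δ = √(8 M log k / k)` this is at least `k^M`, and
`|‖u - v‖ - √2| ≤ √2 |⟪u, v⟫|` for unit vectors. When `δ > 1` there is nothing to prove about the
inner products, and any `k^M` points of the (infinite) unit sphere will do.
-/

open Finset Real RealInnerProductSpace

variable {ι : Type*}

noncomputable def signVector (x : ι → Bool) : EuclideanSpace ℝ ι :=
  WithLp.toLp 2 fun i ↦ if x i then 1 else -1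

theorem signVector_injective : Function.Injective (signVector (ι := ι)) := by
  intro x y h
  funext i
  have := congrFun (congrArg WithLp.ofLp h) i
  revert this
  cases hx : x i <;> cases hy : y i <;> norm_num [signVector, hx, hy]

variable [Fintype ι]

theorem inner_signVector (x y : ι → Bool) :
    ⟪signVector x, signVector y⟫ = ∑ i, if x i = y i then (1 : ℝ) else -1 := by
  simp only [signVector, PiLp.inner_apply, RCLike.inner_apply, conj_trivial]
  refine sum_congr rfl fun i _ ↦ ?_
  cases x i <;> cases y i <;> norm_num

theorem norm_signVector (x : ι → Bool) : ‖signVector x‖ = √(Fintype.card ι) := by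
  rw [← sqrt_sq (norm_nonneg _), ← real_inner_self_eq_norm_sq, inner_signVector]
  simp

theorem sum_exp_inner_signVector [DecidableEq ι] (x : ι → Bool) (s : ℝ) :
    ∑ y, exp (s * ⟪signVector x, signVector y⟫) = (2 * cosh s) ^ Fintype.card ι := by
  have hcoord (i : ι) : ∑ b : Bool, exp (s * if x i = b then 1 else -1) = 2 * cosh s := by
    rw [Fintype.sum_bool, cosh_eq]
    cases x i <;> simp <;> ring
  simp_rw [inner_signVector, mul_sum, exp_sum]
  rw [← Fintype.prod_sum (fun i b ↦ exp (s * if x i = b then 1 else -1))]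
  simp only [hcoord, prod_const, card_univ]

theorem sum_cosh_inner_signVector [DecidableEq ι] (x : ι → Bool) (s : ℝ) :
    ∑ y, cosh (s * ⟪signVector x, signVector y⟫) = (2 * cosh s) ^ Fintype.card ι := by
  have := sum_exp_inner_signVector x (-s)
  simp_rw [cosh_eq (s * _), ← sum_div, sum_add_distrib, sum_exp_inner_signVector, ← neg_mul, this,
    cosh_neg]
  ring

theorem exp_mul_le_two_mul_cosh {s t a : ℝ} (hs : 0 ≤ s) (ht : t ≤ |a|) :
    exp (s * t) ≤ 2 * cosh (s * a) := by
  rw [← cosh_abs, abs_mul, abs_of_nonneg hs, cosh_eq]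
  have := exp_le_exp.2 (mul_le_mul_of_nonneg_left ht hs)
  linarith [exp_pos (-(s * |a|))]

theorem card_abs_ge_mul_exp_le_two_mul_sum_cosh {Ω : Type*} [Fintype Ω] (f : Ω → ℝ) {s : ℝ}
    (hs : 0 ≤ s) (t : ℝ) : #{ω | t ≤ |f ω|} * exp (s * t) ≤ 2 * ∑ ω, cosh (s * f ω) := by
  classical
  calc #{ω | t ≤ |f ω|} * exp (s * t) = ∑ ω with t ≤ |f ω|, exp (s * t) := by
        rw [sum_const, nsmul_eq_mul]
    _ ≤ ∑ ω with t ≤ |f ω|, 2 * cosh (s * f ω) :=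
        sum_le_sum fun ω hω ↦ exp_mul_le_two_mul_cosh hs (mem_filter.1 hω).2
    _ ≤ ∑ ω, 2 * cosh (s * f ω) :=
        sum_le_sum_of_subset_of_nonneg (filter_subset _ _) fun _ _ _ ↦ by positivity
    _ = 2 * ∑ ω, cosh (s * f ω) := (mul_sum _ _ _).symm

theorem card_abs_inner_signVector_ge_le [DecidableEq ι] (x : ι → Bool) {δ : ℝ} (hδ : 0 ≤ δ) :
    (#{y | δ * Fintype.card ι ≤ |⟪signVector x, signVector y⟫|} : ℝ) ≤
      2 * 2 ^ Fintype.card ι * exp (-(Fintype.card ι * δ ^ 2 / 2)) := by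
  set n := Fintype.card ι
  have hmarkov :=
    card_abs_ge_mul_exp_le_two_mul_sum_cosh (fun y ↦ ⟪signVector x, signVector y⟫) hδ (δ * n)
  rw [sum_cosh_inner_signVector] at hmarkov
  have hcosh : (2 * cosh δ) ^ n ≤ 2 ^ n * exp (n * (δ ^ 2 / 2)) := by
    rw [exp_nat_mul, ← mul_pow]
    gcongr
    exact cosh_le_exp_half_sq δ
  rw [← le_div_iff₀ (exp_pos _)] at hmarkov
  calc _ ≤ 2 * (2 * cosh δ) ^ n / exp (δ * (δ * n)) := hmarkov
    _ ≤ 2 * (2 ^ n * exp (n * (δ ^ 2 / 2))) / exp (δ * (δ * n)) := by gcongr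
    _ = 2 * 2 ^ n * exp (-(n * δ ^ 2 / 2)) := by
      rw [mul_div_assoc, mul_div_assoc, ← exp_sub, ← mul_assoc]
      ring_nf

namespace SimpleGraph

variable {V : Type*} [Fintype V] [DecidableEq V] (G : SimpleGraph V) [DecidableRel G.Adj]

theorem exists_isIndepSet_card_le_mul_maxDegree_add_one :
    ∃ s : Finset V, G.IsIndepSet s ∧ Fintype.card V ≤ #s * (G.maxDegree + 1) := by
  obtain ⟨s, hs⟩ := G.exists_isNIndepSet_indepNum
  refine ⟨s, hs.isIndepSet, ?_⟩
  have hdom : univ ⊆ s.biUnion fun v ↦ insert v (G.neighborFinset v) := by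
    intro w _
    by_contra hw
    simp only [mem_biUnion, mem_insert, mem_neighborFinset, not_exists, not_and, not_or] at hw
    have hins : G.IsIndepSet (insert w s : Finset V) := by
      rw [coe_insert, isIndepSet_iff]
      exact hs.isIndepSet.insert fun v hv _ ↦ ⟨mt G.adj_symm (hw v hv).2, (hw v hv).2⟩
    have := hins.card_le_indepNum
    rw [card_insert_of_notMem fun hws ↦ (hw w hws).1 rfl, hs.card_eq] at this
    omega
  calc Fintype.card V ≤ #(s.biUnion fun v ↦ insert v (G.neighborFinset v)) := card_le_card hdom
    _ ≤ #s * (G.maxDegree + 1) := card_biUnion_le_card_mul _ _ _ fun v _ ↦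
        (card_insert_le _ _).trans (by simpa using G.degree_le_maxDegree v)

end SimpleGraph

theorem exists_signVector_code [DecidableEq ι] {δ : ℝ} (hδ₀ : 0 ≤ δ) (hδ : δ ^ 2 ≤ 2 * log 2) :
    ∃ T : Finset (ι → Bool),
      (∀ x ∈ T, ∀ y ∈ T, x ≠ y → |⟪signVector x, signVector y⟫| < δ * Fintype.card ι) ∧
      exp (Fintype.card ι * δ ^ 2 / 2) ≤ 3 * #T := by
  classical
  set n := Fintype.card ι
  set G := SimpleGraph.fromRel fun x y : ι → Bool ↦ δ * n ≤ |⟪signVector x, signVector y⟫|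
  have hdeg (x : ι → Bool) : (G.degree x : ℝ) ≤ 2 * 2 ^ n * exp (-(n * δ ^ 2 / 2)) := by
    refine le_trans ?_ (card_abs_inner_signVector_ge_le x hδ₀)
    rw [← SimpleGraph.card_neighborFinset_eq_degree]
    gcongr
    intro y hy
    simp only [SimpleGraph.mem_neighborFinset, SimpleGraph.fromRel_adj,
      real_inner_comm (signVector x), or_self, G] at hy
    simpa using hy.2
  obtain ⟨T, hT, hcard⟩ := G.exists_isIndepSet_card_le_mul_maxDegree_add_one
  refine ⟨T, fun x hx y hy hxy ↦ ?_, ?_⟩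
  · simpa only [SimpleGraph.fromRel_adj, ne_eq, hxy, not_false_eq_true,
      real_inner_comm (signVector x), or_self, true_and, not_le, G] using hT hx hy hxy
  · obtain ⟨v, hv⟩ := G.exists_maximal_degree_vertex
    have h2n : (2 : ℝ) ^ n = exp (n * log 2) := by rw [exp_nat_mul, exp_log two_pos]
    have hexp : 1 ≤ 2 ^ n * exp (-(n * δ ^ 2 / 2)) := by
      rw [h2n, ← exp_add, one_le_exp_iff]
      nlinarith [(Nat.cast_nonneg n : (0:ℝ) ≤ n)]
    have hcube : (2 : ℝ) ^ n ≤ #T * (3 * 2 ^ n * exp (-(n * δ ^ 2 / 2))) := by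
      have := (Nat.cast_le (α := ℝ)).2 hcard
      push_cast [Fintype.card_fun, Fintype.card_bool, hv] at this
      exact this.trans (by gcongr; linarith [hdeg v])
    have : 2 ^ n * exp (n * δ ^ 2 / 2) ≤ 2 ^ n * (3 * #T) := by
      calc 2 ^ n * exp (n * δ ^ 2 / 2)
          ≤ #T * (3 * 2 ^ n * exp (-(n * δ ^ 2 / 2))) * exp (n * δ ^ 2 / 2) := by gcongr
        _ = 2 ^ n * (3 * #T) := by rw [exp_neg]; field_simp
    exact le_of_mul_le_mul_left this (by positivity)

theorem exists_finset_norm_eq_one_abs_inner_lt [Nonempty ι] {δ : ℝ} (hδ₀ : 0 ≤ δ)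
    (hδ : δ ^ 2 ≤ 2 * log 2) :
    ∃ S : Finset (EuclideanSpace ℝ ι), (∀ v ∈ S, ‖v‖ = 1) ∧
      (∀ u ∈ S, ∀ v ∈ S, u ≠ v → |⟪u, v⟫| < δ) ∧ exp (Fintype.card ι * δ ^ 2 / 2) ≤ 3 * #S := by
  classical
  obtain ⟨T, hT, hcard⟩ := exists_signVector_code (ι := ι) hδ₀ hδ
  have hn : (0 : ℝ) < Fintype.card ι := by exact_mod_cast Fintype.card_pos
  set f : (ι → Bool) → EuclideanSpace ℝ ι := fun x ↦ (√(Fintype.card ι))⁻¹ • signVector x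
  have hf : f.Injective := (smul_right_injective _ (by positivity)).comp signVector_injective
  refine ⟨T.image f, ?_, ?_, by rwa [card_image_of_injective _ hf]⟩
  · simp only [mem_image, forall_exists_index, and_imp, forall_apply_eq_imp_iff₂]
    intro x _
    rw [norm_smul, norm_signVector, norm_inv, norm_of_nonneg (sqrt_nonneg _),
      inv_mul_cancel₀ (by positivity)]
  · simp only [mem_image, forall_exists_index, and_imp, forall_apply_eq_imp_iff₂]
    intro x hx y hy hxy
    rw [real_inner_smul_left, real_inner_smul_right, ← mul_assoc, ← mul_inv, mul_self_sqrt hn.le,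
      abs_mul, abs_inv, abs_of_pos hn, inv_mul_lt_iff₀ hn, mul_comm]
    exact hT x hx y hy fun h ↦ hxy (h ▸ rfl)

theorem exists_finset_card_eq_norm_eq_one {E : Type*} [NormedAddCommGroup E] [NormedSpace ℝ E]
    (hE : 1 < Module.rank ℝ E) (N : ℕ) : ∃ S : Finset E, #S = N ∧ ∀ v ∈ S, ‖v‖ = 1 := by
  have : Nontrivial E := rank_pos_iff_nontrivial.1 (zero_lt_one.trans hE)
  obtain ⟨v, hv⟩ := (NormedSpace.sphere_nonempty (x := (0 : E))).2 zero_le_one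
  have hv_ne : v ≠ -v := fun h ↦ by
    have := congrArg norm (eq_neg_iff_add_eq_zero.1 h)
    rw [← two_smul ℝ, norm_smul, mem_sphere_zero_iff_norm.1 hv] at this
    norm_num at this
  have hinf : (Metric.sphere (0 : E) 1).Infinite :=
    (isConnected_sphere hE 0 zero_le_one).isPreconnected.infinite_of_nontrivial
      ⟨v, hv, -v, by simpa using hv, hv_ne⟩
  obtain ⟨S, hS, hcard⟩ := hinf.exists_subset_card_eq N
  exact ⟨S, hcard, fun w hw ↦ mem_sphere_zero_iff_norm.1 (hS hw)⟩

theorem abs_norm_sub_sub_sqrt_two_le {E : Type*} [NormedAddCommGroup E] [InnerProductSpace ℝ E]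
    {u v : E} (hu : ‖u‖ = 1) (hv : ‖v‖ = 1) : |‖u - v‖ - √2| ≤ √2 * |⟪u, v⟫| := by
  have hsq : ‖u - v‖ ^ 2 = 2 - 2 * ⟪u, v⟫ := by rw [norm_sub_sq_real, hu, hv]; ring
  have hr : 0 < √2 := by positivity
  have hfactor : |‖u - v‖ - √2| * (‖u - v‖ + √2) = 2 * |⟪u, v⟫| := by
    rw [← abs_of_pos (by positivity : 0 < ‖u - v‖ + √2), ← abs_mul,
      show (‖u - v‖ - √2) * (‖u - v‖ + √2) = ‖u - v‖ ^ 2 - √2 ^ 2 by ring, hsq,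
      sq_sqrt zero_le_two, sub_sub_cancel_left, abs_neg, abs_mul, abs_two]
  refine le_of_mul_le_mul_right ?_ hr
  calc |‖u - v‖ - √2| * √2 ≤ |‖u - v‖ - √2| * (‖u - v‖ + √2) := by
        gcongr; linarith [norm_nonneg (u - v)]
    _ = √2 * |⟪u, v⟫| * √2 := by rw [hfactor, mul_right_comm, mul_self_sqrt zero_le_two]

theorem exists_finset_norm_eq_one_abs_inner_le {k : ℕ} (hk : 2 ≤ k) {M : ℝ} (hM : 1 ≤ M) :
    ∃ S : Finset (EuclideanSpace ℝ (Fin k)), (∀ v ∈ S, ‖v‖ = 1) ∧ (k : ℝ) ^ M ≤ #S ∧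
      ∀ u ∈ S, ∀ v ∈ S, u ≠ v → |⟪u, v⟫| ≤ √(8 * (M * log k / k)) := by
  have hk₀ : (0 : ℝ) < k := by positivity
  set L := M * log k
  have hlog : log 2 ≤ L := calc
    log 2 ≤ log k := log_le_log two_pos (by exact_mod_cast hk)
    _ ≤ L := le_mul_of_one_le_left (log_nonneg (by exact_mod_cast (by omega : 1 ≤ k))) hM
  have hkM : (k : ℝ) ^ M = exp L := by rw [rpow_def_of_pos hk₀, mul_comm]
  -- For `δ² = 8 L / k` we get `e^{k δ²/2} = e^L · e^{3L}`, and `e^{3L} ≥ 8` absorbs the factor `3`.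
  by_cases hL : 8 * L ≤ k
  · have hδ : √(8 * (L / k)) ^ 2 = 8 * L / k := by rw [sq_sqrt (by positivity)]; ring
    have : Nonempty (Fin k) := ⟨⟨0, by omega⟩⟩
    obtain ⟨S, hnorm, hinner, hcard⟩ := exists_finset_norm_eq_one_abs_inner_lt (ι := Fin k)
      (sqrt_nonneg (8 * (L / k)))
      (by rw [hδ, div_le_iff₀ hk₀]; nlinarith [log_two_gt_d9])
    refine ⟨S, hnorm, ?_, fun u hu v hv huv ↦ (hinner u hu v hv huv).le⟩
    rw [Fintype.card_fin, hδ, show (k : ℝ) * (8 * L / k) / 2 = L + 3 * L by field_simp; ring,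
      exp_add] at hcard
    have : 3 ≤ exp (3 * L) := by linarith [add_one_le_exp (3 * L), log_two_gt_d9]
    rw [hkM]
    nlinarith [exp_pos L]
  · have hrank : 1 < Module.rank ℝ (EuclideanSpace ℝ (Fin k)) := by
      rw [← Module.finrank_eq_rank, finrank_euclideanSpace_fin]
      exact_mod_cast hk
    obtain ⟨S, hcard, hnorm⟩ := exists_finset_card_eq_norm_eq_one hrank ⌈(k : ℝ) ^ M⌉₊
    refine ⟨S, hnorm, hcard ▸ Nat.le_ceil _, fun u hu v hv _ ↦ ?_⟩
    calc |⟪u, v⟫| ≤ ‖u‖ * ‖v‖ := abs_real_inner_le_norm u v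
      _ = 1 := by rw [hnorm u hu, hnorm v hv, one_mul]
      _ ≤ √(8 * (L / k)) := by
        rw [one_le_sqrt, ← mul_div_assoc, one_le_div hk₀]
        linarith

theorem kabatjanskii_levenstein_bound :
    ∃ C : ℝ, 0 < C ∧ ∀ k : ℕ, 2 ≤ k → ∀ M : ℝ, 1 ≤ M →
      ∃ S : Finset (EuclideanSpace ℝ (Fin k)),
        (∀ v ∈ S, ‖v‖ = 1) ∧
        (k : ℝ) ^ M ≤ (S.card : ℝ) ∧
        ∀ u ∈ S, ∀ v ∈ S, u ≠ v →
          Real.sqrt 2 - C * Real.sqrt (M * Real.log k / k) ≤ ‖u - v‖ ∧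
          ‖u - v‖ ≤ Real.sqrt 2 + C * Real.sqrt (M * Real.log k / k) := by
  refine ⟨4, by norm_num, fun k hk M hM ↦ ?_⟩
  obtain ⟨S, hnorm, hcard, hinner⟩ := exists_finset_norm_eq_one_abs_inner_le hk hM
  refine ⟨S, hnorm, hcard, fun u hu v hv huv ↦ ?_⟩
  have hsqrt : √2 * √(8 * (M * log k / k)) = 4 * √(M * log k / k) := by
    rw [← sqrt_mul zero_le_two, ← mul_assoc, sqrt_mul (by norm_num),
      show (2 : ℝ) * 8 = 4 ^ 2 by norm_num, sqrt_sq (by norm_num)]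
  have h := (abs_norm_sub_sub_sqrt_two_le (hnorm u hu) (hnorm v hv)).trans
    (mul_le_mul_of_nonneg_left (hinner u hu v hv huv) (sqrt_nonneg 2))
  rw [hsqrt, abs_sub_le_iff] at h
  constructor <;> linarith
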